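/- arXiv:2502.04872 — 5 statements merged into one kernel-verified Lean document; each statement's English description precedes it below -/
import Mathlib

section
/- Let I be a monomial ideal in a polynomial ring R over a field, W a subset of the variables, and n ≥ 1 an integer. Then the restriction of the n-th power equals the n-th power of the restriction: (I^n)|_W = (I|_W)^n. -/
open MvPolynomial

/-- `I` is a monomial ideal: it is generated by a set of monomials. -/
def IsMonomialIdeal {K : Type*} [Field K] {σ : Type*} (I : Ideal (MvPolynomial σ K)) : Prop :=
  ∃ S : Set (σ →₀ ℕ), I = Ideal.span ((fun s => (monomial s (1 : K))) '' S)

/-- The restriction `I|_W` of a monomial ideal `I` to a set of variables `W`: the ideal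
generated by the monomials of `I` whose support is contained in `W`; for a monomial ideal
this is exactly the ideal generated by the minimal monomial generators of `I` with support
contained in `W`. -/
noncomputable def Ideal.restrictVars {K : Type*} [Field K] {σ : Type*} (I : Ideal (MvPolynomial σ K))
    (W : Set σ) : Ideal (MvPolynomial σ K) :=
  Ideal.span {f | ∃ s : σ →₀ ℕ, f = monomial s (1 : K) ∧ f ∈ I ∧ ↑s.support ⊆ W}

/-!
A monomial ideal generated by exponent set `S` has `n`-th power generated by the `n`-fold
sumset `n • S`, and its restriction to `W` is generated by the exponents of `S` supported in `W`.
Since exponents are natural numbers, a sum is supported in `W` exactly when every summand is,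
so restricting `n • S` to `W` gives the `n`-fold sumset of the restricted generators.
-/

open Pointwise

section

variable {K σ : Type*} [Field K]

lemma image_monomial_add (A B : Set (σ →₀ ℕ)) :
    (fun s => monomial s (1 : K)) '' (A + B) =
      (fun s => monomial s (1 : K)) '' A * (fun s => monomial s (1 : K)) '' B := by
  ext x
  simp only [Set.mem_image, Set.mem_add, Set.mem_mul]
  constructor
  · rintro ⟨_, ⟨a, ha, b, hb, rfl⟩, rfl⟩
    exact ⟨_, ⟨a, ha, rfl⟩, _, ⟨b, hb, rfl⟩, by rw [monomial_mul, mul_one]⟩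
  · rintro ⟨_, ⟨a, ha, rfl⟩, _, ⟨b, hb, rfl⟩, rfl⟩
    exact ⟨a + b, ⟨a, ha, b, hb, rfl⟩, by rw [monomial_mul, mul_one]⟩

lemma span_monomial_pow (S : Set (σ →₀ ℕ)) (n : ℕ) :
    Ideal.span ((fun s => monomial s (1 : K)) '' S) ^ n =
      Ideal.span ((fun s => monomial s (1 : K)) '' (n • S)) := by
  induction n with
  | zero => simp
  | succ n ih => rw [pow_succ, ih, Ideal.span_mul_span', succ_nsmul, image_monomial_add]

lemma nsmul_inter_setOf_support_subset (S : Set (σ →₀ ℕ)) (W : Set σ) (n : ℕ) :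
    n • S ∩ {s | ↑s.support ⊆ W} = n • (S ∩ {s | ↑s.support ⊆ W}) := by
  classical
  induction n with
  | zero => simp [Set.inter_eq_left]
  | succ n ih =>
    ext t
    simp only [succ_nsmul, ← ih, Set.mem_inter_iff, Set.mem_add, Set.mem_ofPred_eq]
    constructor
    · rintro ⟨⟨a, ha, b, hb, rfl⟩, hW⟩
      rw [Finsupp.support_add_eq_union, Finset.coe_union, Set.union_subset_iff] at hW
      exact ⟨a, ⟨ha, hW.1⟩, b, ⟨hb, hW.2⟩, rfl⟩
    · rintro ⟨a, ⟨ha, haW⟩, b, ⟨hb, hbW⟩, rfl⟩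
      rw [Finsupp.support_add_eq_union, Finset.coe_union]
      exact ⟨⟨a, ha, b, hb, rfl⟩, Set.union_subset haW hbW⟩

lemma restrictVars_span_monomial (S : Set (σ →₀ ℕ)) (W : Set σ) :
    (Ideal.span ((fun s => monomial s (1 : K)) '' S)).restrictVars W =
      Ideal.span ((fun s => monomial s (1 : K)) '' (S ∩ {s | ↑s.support ⊆ W})) := by
  apply le_antisymm
  · rw [Ideal.restrictVars, Ideal.span_le]
    rintro _ ⟨m, rfl, hm, hmW⟩
    obtain ⟨s, hs, hsm⟩ :=
      mem_ideal_span_monomial_image.1 hm m (by classical simp [coeff_monomial])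
    have hsW : ↑s.support ⊆ W := (Finset.coe_subset.2 (Finsupp.support_mono hsm)).trans hmW
    have hmono : monomial m (1 : K) = monomial (m - s) 1 * monomial s 1 := by
      rw [monomial_mul, mul_one, tsub_add_cancel_of_le hsm]
    rw [hmono]
    exact Ideal.mul_mem_left _ _ (Ideal.subset_span ⟨s, ⟨hs, hsW⟩, rfl⟩)
  · rw [Ideal.span_le]
    rintro _ ⟨s, ⟨hs, hsW⟩, rfl⟩
    exact Ideal.subset_span ⟨s, rfl, Ideal.subset_span ⟨s, hs, rfl⟩, hsW⟩

end

theorem restrictVars_pow_general {K : Type*} [Field K] {σ : Type*}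
    (I : Ideal (MvPolynomial σ K)) (hI : IsMonomialIdeal I) (W : Set σ)
    (n : ℕ) :
    (I ^ n).restrictVars W = (I.restrictVars W) ^ n := by
  obtain ⟨S, rfl⟩ := hI
  rw [restrictVars_span_monomial, span_monomial_pow, span_monomial_pow,
    restrictVars_span_monomial, nsmul_inter_setOf_support_subset]

/-- The restriction of a power of a monomial ideal is the power of the restriction:
`(I^n)|_W = (I|_W)^n` for all `n ≥ 1`. -/
theorem restrictVars_pow {K : Type*} [Field K] {σ : Type*}
    (I : Ideal (MvPolynomial σ K)) (hI : IsMonomialIdeal I) (W : Set σ)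
    (n : ℕ) (hn : 1 ≤ n) :
    (I ^ n).restrictVars W = (I.restrictVars W) ^ n :=
  restrictVars_pow_general I hI W n
end

section
/- Let G be a graph on vertices {x_1,...,x_t, y_1,...,y_t} satisfying: (1*) x_i y_i ∈ E(G) for all i; (2*) if x_i y_j ∈ E(G) then i ≤ j; (3*) if x_i y_j ∈ E(G) then x_i x_j ∉ E(G); (4*) if x_i y_k and x_k y_j are edges with i, j, k distinct, then x_i y_j ∈ E(G); (5*) if x_i y_k and x_k x_j are edges with i, j, k distinct, then x_i x_j ∈ E(G); and assume Y = {y_1,...,y_t} is an independent set and every maximal independent set of G has cardinality t. Then for every k ∈ {1,...,t}, every maximal independent set T of G contains exactly one of x_k and y_k. -/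
/-!
An independent set `T` contains at most one vertex of each edge `x_k y_k`, so forgetting the
side `X`/`Y` is injective on `T`. Since `|T| = t`, its image is all of `{1, …, t}`: every index
`k` is hit, by exactly one of `x_k`, `y_k`.
-/

open Sum

/-- `T` is an independent set of the graph `G`. -/
def IndepSet {V : Type*} (G : SimpleGraph V) (T : Set V) : Prop :=
  ∀ u ∈ T, ∀ v ∈ T, ¬ G.Adj u v

/-- `T` is a maximal independent set of the graph `G`. -/
def MaximalIndepSet {V : Type*} (G : SimpleGraph V) (T : Set V) : Prop :=
  IndepSet G T ∧ ∀ T' : Set V, IndepSet G T' → T ⊆ T' → T' = T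

open Set

variable {α : Type*} {G : SimpleGraph (α ⊕ α)} {T : Set (α ⊕ α)}

lemma IndepSet.not_inl_mem_and_inr_mem (hmatch : ∀ i, G.Adj (inl i) (inr i)) (hT : IndepSet G T)
    (k : α) : ¬ (inl k ∈ T ∧ inr k ∈ T) :=
  fun ⟨hx, hy⟩ => hT _ hx _ hy (hmatch k)

lemma IndepSet.injOn_elim_id (hmatch : ∀ i, G.Adj (inl i) (inr i)) (hT : IndepSet G T) :
    InjOn (Sum.elim id id) T := by
  rintro (i | i) hi (j | j) hj (rfl : i = j)
  · rfl
  · exact (hT.not_inl_mem_and_inr_mem hmatch i ⟨hi, hj⟩).elim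
  · exact (hT.not_inl_mem_and_inr_mem hmatch i ⟨hj, hi⟩).elim
  · rfl

lemma image_elim_id_eq_univ [Finite α] (hinj : InjOn (Sum.elim id id) T)
    (hcard : T.ncard = Nat.card α) : Sum.elim id id '' T = univ :=
  eq_of_subset_of_ncard_le (subset_univ _) (by rw [hinj.ncard_image, ncard_univ, hcard])

lemma inl_mem_or_inr_mem_of_image_eq_univ (himage : Sum.elim id id '' T = univ) (k : α) :
    inl k ∈ T ∨ inr k ∈ T := by
  obtain ⟨a | a, ha, rfl⟩ : k ∈ Sum.elim id id '' T := himage ▸ mem_univ k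
  · exact Or.inl ha
  · exact Or.inr ha

theorem maximalIndep_contains_exactly_one_general (t : ℕ) (G : SimpleGraph (Fin t ⊕ Fin t))
    (h1 : ∀ i, G.Adj (inl i) (inr i))
    (hwc : ∀ T : Set (Fin t ⊕ Fin t), MaximalIndepSet G T → T.ncard = t) :
    ∀ (k : Fin t) (T : Set (Fin t ⊕ Fin t)), MaximalIndepSet G T →
      ((inl k ∈ T ∧ inr k ∉ T) ∨ (inl k ∉ T ∧ inr k ∈ T)) := by
  intro k T hT
  have himage : Sum.elim id id '' T = univ :=
    image_elim_id_eq_univ (hT.1.injOn_elim_id h1) (by rw [hwc T hT, Nat.card_fin])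
  have hboth := hT.1.not_inl_mem_and_inr_mem h1 k
  rcases inl_mem_or_inr_mem_of_image_eq_univ himage k with hx | hy
  · exact Or.inl ⟨hx, fun hy => hboth ⟨hx, hy⟩⟩
  · exact Or.inr ⟨fun hx => hboth ⟨hx, hy⟩, hy⟩

/-- For a graph on `{x_1,...,x_t,y_1,...,y_t}` satisfying conditions (1*)–(5*), with
`Y = {y_1,...,y_t}` independent and every maximal independent set of cardinality `t`,
every maximal independent set contains exactly one of `x_k` and `y_k` for each `k`. -/
theorem maximalIndep_contains_exactly_one (t : ℕ) (G : SimpleGraph (Fin t ⊕ Fin t))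
    (h1 : ∀ i, G.Adj (inl i) (inr i))
    (h2 : ∀ i j, G.Adj (inl i) (inr j) → i ≤ j)
    (h3 : ∀ i j, G.Adj (inl i) (inr j) → ¬ G.Adj (inl i) (inl j))
    (h4 : ∀ i j k, i ≠ j → j ≠ k → i ≠ k →
      G.Adj (inl i) (inr k) → G.Adj (inl k) (inr j) → G.Adj (inl i) (inr j))
    (h5 : ∀ i j k, i ≠ j → j ≠ k → i ≠ k →
      G.Adj (inl i) (inr k) → G.Adj (inl k) (inl j) → G.Adj (inl i) (inl j))
    (hY : ∀ i j, ¬ G.Adj (inr i) (inr j))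
    (hwc : ∀ T : Set (Fin t ⊕ Fin t), MaximalIndepSet G T → T.ncard = t) :
    ∀ (k : Fin t) (T : Set (Fin t ⊕ Fin t)), MaximalIndepSet G T →
      ((inl k ∈ T ∧ inr k ∉ T) ∨ (inl k ∉ T ∧ inr k ∈ T)) :=
  maximalIndep_contains_exactly_one_general t G h1 hwc
end

section
/- Let G be a graph on vertices {x_1,...,x_t, y_1,...,y_t}, t ≥ 1, satisfying conditions (1*)–(5*): x_i y_i ∈ E(G) for all i; if x_i y_j ∈ E(G) then i ≤ j; if x_i y_j ∈ E(G) then x_i x_j ∉ E(G); if x_i y_k, x_k y_j ∈ E(G) with i,j,k distinct then x_i y_j ∈ E(G); if x_i y_k, x_k x_j ∈ E(G) with i,j,k distinct then x_i x_j ∈ E(G); and assume Y = {y_1,...,y_t} is independent with no edges among or into it except those of the form x_i y_j. Then G has at least two leaf vertices (vertices of degree 1). -/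
/-!
The vertex `y_1` is always a leaf, since by (2*) its only neighbour is `x_1`. If some other
`y_k` is a leaf we are done. Otherwise every `y_k` with `k ≠ 1` has a neighbour `x_i` with
`i < k`, and (4*) propagates this down to `x_1 y_k ∈ E(G)` for all `k ≠ 1`. Then (3*) and (5*)
forbid any edge `x_t x_j`, and by (2*) the only `y`-neighbour of `x_t` is `y_t`, so `x_t` is the
second leaf. Indices are shifted to `Fin t`: `y_1` is `inr 0` and `x_t` is `inl (Fin.last n)`.
-/

open Sum SimpleGraph

theorem degree_eq_one_of_forall_adj_eq {V : Type*} {G : SimpleGraph V} {v w : V}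
    [Fintype (G.neighborSet v)] (hvw : G.Adj v w) (hw : ∀ u, G.Adj v u → u = w) :
    G.degree v = 1 :=
  degree_eq_one_iff_existsUnique_adj.mpr ⟨w, hvw, hw⟩

theorem degree_inr_eq_one {t : ℕ} {G : SimpleGraph (Fin t ⊕ Fin t)} [DecidableRel G.Adj]
    {k : Fin t} (h1 : ∀ i, G.Adj (inl i) (inr i)) (hY : ∀ i j, ¬ G.Adj (inr i) (inr j))
    (hk : ∀ i, G.Adj (inl i) (inr k) → i = k) :
    G.degree (inr k) = 1 := by
  refine degree_eq_one_of_forall_adj_eq (h1 k).symm ?_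
  rintro (i | j) h
  · exact congrArg inl (hk i h.symm)
  · exact absurd h (hY k j)

theorem adj_inl_zero_inr {n : ℕ} {G : SimpleGraph (Fin (n + 1) ⊕ Fin (n + 1))}
    (h2 : ∀ i j, G.Adj (inl i) (inr j) → i ≤ j)
    (h4 : ∀ i j k, i ≠ j → j ≠ k → i ≠ k →
      G.Adj (inl i) (inr k) → G.Adj (inl k) (inr j) → G.Adj (inl i) (inr j))
    (hc : ∀ k, k ≠ 0 → ∃ i, G.Adj (inl i) (inr k) ∧ i ≠ k) :
    ∀ k, k ≠ 0 → G.Adj (inl 0) (inr k) := by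
  intro k
  induction k using WellFoundedLT.induction with
  | _ k ih =>
    intro hk0
    obtain ⟨i, hadj, hik⟩ := hc k hk0
    by_cases hi0 : i = 0
    · exact hi0 ▸ hadj
    · have hlt : i < k := lt_of_le_of_ne (h2 i k hadj) hik
      exact h4 0 k i (Ne.symm hk0) (Ne.symm hik) (Ne.symm hi0) (ih i hlt hi0) hadj

theorem degree_inl_last_eq_one {n : ℕ} {G : SimpleGraph (Fin (n + 1) ⊕ Fin (n + 1))}
    [DecidableRel G.Adj] (h1 : ∀ i, G.Adj (inl i) (inr i))
    (h2 : ∀ i j, G.Adj (inl i) (inr j) → i ≤ j)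
    (h3 : ∀ i j, G.Adj (inl i) (inr j) → ¬ G.Adj (inl i) (inl j))
    (h5 : ∀ i j k, i ≠ j → j ≠ k → i ≠ k →
      G.Adj (inl i) (inr k) → G.Adj (inl k) (inl j) → G.Adj (inl i) (inl j))
    (hx0 : ∀ k, k ≠ 0 → G.Adj (inl 0) (inr k)) :
    G.degree (inl (Fin.last n)) = 1 := by
  refine degree_eq_one_of_forall_adj_eq (h1 _) ?_
  rintro (j | j) hj
  · exfalso
    have hjl : j ≠ Fin.last n := fun h => G.irrefl (h ▸ hj)
    have hl0 : Fin.last n ≠ 0 :=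
      ne_of_gt ((Fin.zero_le j).trans_lt (Fin.lt_last_iff_ne_last.mpr hjl))
    have h0l := hx0 _ hl0
    by_cases hj0 : j = 0
    · exact h3 0 _ h0l (hj0 ▸ hj.symm)
    · exact h3 0 j (hx0 j hj0) (h5 0 j _ (Ne.symm hj0) hjl (Ne.symm hl0) h0l hj)
  · exact congrArg inr (Fin.last_le_iff.mp (h2 _ j hj))

/-- A graph on `{x_1,...,x_t,y_1,...,y_t}`, `t ≥ 1`, satisfying conditions (1*)–(5*),
in which `Y = {y_1,...,y_t}` is independent (so every edge has the form `x_i x_j` or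
`x_i y_j`), has at least two leaf vertices (vertices of degree 1). -/
theorem exists_two_leaves (t : ℕ) (ht : 1 ≤ t) (G : SimpleGraph (Fin t ⊕ Fin t))
    [DecidableRel G.Adj]
    (h1 : ∀ i, G.Adj (inl i) (inr i))
    (h2 : ∀ i j, G.Adj (inl i) (inr j) → i ≤ j)
    (h3 : ∀ i j, G.Adj (inl i) (inr j) → ¬ G.Adj (inl i) (inl j))
    (h4 : ∀ i j k, i ≠ j → j ≠ k → i ≠ k →
      G.Adj (inl i) (inr k) → G.Adj (inl k) (inr j) → G.Adj (inl i) (inr j))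
    (h5 : ∀ i j k, i ≠ j → j ≠ k → i ≠ k →
      G.Adj (inl i) (inr k) → G.Adj (inl k) (inl j) → G.Adj (inl i) (inl j))
    (hY : ∀ i j, ¬ G.Adj (inr i) (inr j)) :
    ∃ u v : Fin t ⊕ Fin t, u ≠ v ∧ G.degree u = 1 ∧ G.degree v = 1 := by
  obtain ⟨n, rfl⟩ : ∃ n, t = n + 1 := ⟨t - 1, by omega⟩
  have hy0 : G.degree (inr 0) = 1 :=
    degree_inr_eq_one h1 hY fun i hi => Fin.le_zero_iff.mp (h2 i 0 hi)
  by_cases hc : ∃ k, k ≠ 0 ∧ ∀ i, G.Adj (inl i) (inr k) → i = k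
  · obtain ⟨k, hk0, hk⟩ := hc
    exact ⟨inr 0, inr k, by simpa using hk0.symm, hy0, degree_inr_eq_one h1 hY hk⟩
  · push Not at hc
    exact ⟨inr 0, inl (Fin.last n), inr_ne_inl, hy0,
      degree_inl_last_eq_one h1 h2 h3 h5 (adj_inl_zero_inr h2 h4 hc)⟩
end

section
/- Let G be a graph on vertices {x_1,...,x_t, y_1,...,y_t} satisfying conditions (1*)–(5*) of a Cohen-Macaulay very well-covered graph. If G has exactly two leaf vertices, then G is bipartite. -/
open Sum

/-!
By (1*), (2*) and (4*), `i ≼ j :↔ x_i y_j ∈ E(G)` is a partial order, and by (3*) and (5*) the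
two ends of an edge `x_a x_b` have no common lower bound. For a minimal `m` the vertex `y_m` is a
leaf, and for a maximal `J` the vertex `x_J` is a leaf unless it has a neighbour in `X`.
If `X` is independent, `G` is bipartite with parts `X` and `Y`. Otherwise an edge `x_a x_b` gives
two distinct minimal elements `m₁ ≼ a` and `m₂ ≼ b`, so `y_{m₁}` and `y_{m₂}` are the only leaves.
Hence every index lies above `m₁` or `m₂`, and no index lies above both: a maximal `J` above both
would make `x_J` a third leaf. Then `A = {i | m₁ ≼ i}` 2-colours `G` by `x_i ↦ [i ∈ A]`,
`y_i ↦ [i ∉ A]`.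
-/

theorem exists_rel_forall_rel_eq_of_wellFounded {β : Type*} {r : β → β → Prop}
    (hrefl : ∀ a, r a a) (htrans : ∀ {a b c}, r a b → r b c → r a c)
    (hwf : WellFounded fun a b => r a b ∧ a ≠ b) (b : β) :
    ∃ m, r m b ∧ ∀ a, r a m → a = m := by
  obtain ⟨m, hmb, hmin⟩ := hwf.has_min {m | r m b} ⟨b, hrefl b⟩
  refine ⟨m, hmb, fun a ham => ?_⟩
  by_contra hne
  exact hmin a (htrans ham hmb) ⟨ham, hne⟩

theorem colorable_two_of_adj_inl_iff {α : Type*} {G : SimpleGraph (α ⊕ α)} (A : Set α)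
    (hinr : ∀ i j, ¬ G.Adj (inr i) (inr j))
    (hinl : ∀ a b, G.Adj (inl a) (inl b) → (a ∈ A ↔ b ∉ A))
    (hinlinr : ∀ i j, G.Adj (inl i) (inr j) → (i ∈ A ↔ j ∈ A)) :
    G.Colorable 2 := by
  classical
  let c : G.Coloring Bool := SimpleGraph.Coloring.mk
    (Sum.elim (fun i => decide (i ∈ A)) (fun j => !decide (j ∈ A))) <| by
      rintro (i | i) (j | j) h
      · simp only [Sum.elim_inl, ne_eq, decide_eq_decide]
        have := hinl i j h
        tauto
      · simpa using hinlinr i j h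
      · simpa using (hinlinr j i h.symm).symm
      · exact absurd h (hinr i j)
  simpa using c.colorable

/-- The labelling conditions (1*)–(5*), together with the independence of `Y`, where `inl i` is
`x_i` and `inr i` is `y_i`. -/
structure IsCMLabeling {α : Type*} [PartialOrder α] (G : SimpleGraph (α ⊕ α)) : Prop where
  adj_inl_inr_self : ∀ i, G.Adj (inl i) (inr i)
  le_of_adj_inl_inr : ∀ i j, G.Adj (inl i) (inr j) → i ≤ j
  not_adj_inl_inl_of_adj_inl_inr : ∀ i j, G.Adj (inl i) (inr j) → ¬ G.Adj (inl i) (inl j)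
  adj_inl_inr_of_adj_inl_inr : ∀ i j k, i ≠ j → j ≠ k → i ≠ k →
    G.Adj (inl i) (inr k) → G.Adj (inl k) (inr j) → G.Adj (inl i) (inr j)
  adj_inl_inl_of_adj_inl_inr : ∀ i j k, i ≠ j → j ≠ k → i ≠ k →
    G.Adj (inl i) (inr k) → G.Adj (inl k) (inl j) → G.Adj (inl i) (inl j)
  not_adj_inr : ∀ i j, ¬ G.Adj (inr i) (inr j)

namespace IsCMLabeling

variable {α : Type*} [PartialOrder α] {G : SimpleGraph (α ⊕ α)}

theorem adj_inl_inr_trans (hG : IsCMLabeling G) {i j k : α}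
    (hik : G.Adj (inl i) (inr k)) (hkj : G.Adj (inl k) (inr j)) : G.Adj (inl i) (inr j) := by
  obtain rfl | hik' := eq_or_ne i k
  · exact hkj
  obtain rfl | hkj' := eq_or_ne k j
  · exact hik
  obtain rfl | hij := eq_or_ne i j
  · exact hG.adj_inl_inr_self i
  exact hG.adj_inl_inr_of_adj_inl_inr i j k hij hkj'.symm hik' hik hkj

theorem exists_source_adj [WellFoundedLT α] (hG : IsCMLabeling G) (j : α) :
    ∃ m, G.Adj (inl m) (inr j) ∧ ∀ i, G.Adj (inl i) (inr m) → i = m :=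
  exists_rel_forall_rel_eq_of_wellFounded (r := fun a b => G.Adj (inl a) (inr b))
    hG.adj_inl_inr_self hG.adj_inl_inr_trans
    (Subrelation.wf (fun h => lt_of_le_of_ne (hG.le_of_adj_inl_inr _ _ h.1) h.2)
      wellFounded_lt) j

theorem exists_sink_adj [WellFoundedGT α] (hG : IsCMLabeling G) (j : α) :
    ∃ J, G.Adj (inl j) (inr J) ∧ ∀ k, G.Adj (inl J) (inr k) → k = J :=
  exists_rel_forall_rel_eq_of_wellFounded (r := fun a b => G.Adj (inl b) (inr a))
    hG.adj_inl_inr_self (fun hab hbc => hG.adj_inl_inr_trans hbc hab)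
    (Subrelation.wf (fun h => lt_of_le_of_ne (hG.le_of_adj_inl_inr _ _ h.1) h.2.symm)
      wellFounded_gt) j

theorem not_adj_inl_inl_of_adj_inl_inr_of_adj_inl_inr (hG : IsCMLabeling G) {a b m : α}
    (hma : G.Adj (inl m) (inr a)) (hmb : G.Adj (inl m) (inr b)) : ¬ G.Adj (inl a) (inl b) := by
  intro hab
  obtain rfl | hma' := eq_or_ne m a
  · exact hG.not_adj_inl_inl_of_adj_inl_inr _ _ hmb hab
  obtain rfl | hmb' := eq_or_ne m b
  · exact hG.not_adj_inl_inl_of_adj_inl_inr _ _ hma hab.symm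
  have hba : b ≠ a := fun h => hab.ne (congrArg inl h.symm)
  exact hG.not_adj_inl_inl_of_adj_inl_inr m b hmb
    (hG.adj_inl_inl_of_adj_inl_inr m b a hmb' hba hma' hma hab)

variable [Fintype α] [DecidableRel G.Adj]

theorem degree_inr_eq_one (hG : IsCMLabeling G) {m : α}
    (hm : ∀ i, G.Adj (inl i) (inr m) → i = m) : G.degree (inr m) = 1 := by
  refine SimpleGraph.degree_eq_one_iff_existsUnique_adj.mpr
    ⟨inl m, (hG.adj_inl_inr_self m).symm, ?_⟩
  rintro (i | j) h
  · rw [hm i h.symm]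
  · exact absurd h (hG.not_adj_inr m j)

theorem degree_inl_eq_one (hG : IsCMLabeling G) {J : α}
    (hJ : ∀ k, G.Adj (inl J) (inr k) → k = J) (hJinl : ∀ k, ¬ G.Adj (inl J) (inl k)) :
    G.degree (inl J) = 1 := by
  refine SimpleGraph.degree_eq_one_iff_existsUnique_adj.mpr
    ⟨inr J, hG.adj_inl_inr_self J, ?_⟩
  rintro (k | k) h
  · exact absurd h (hJinl k)
  · rw [hJ k h]

theorem adj_inl_inr_of_subset_leaves (hG : IsCMLabeling G) {m₁ m₂ : α}
    (hleaves : {v | G.degree v = 1} ⊆ {inr m₁, inr m₂}) (i : α) :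
    G.Adj (inl m₁) (inr i) ∨ G.Adj (inl m₂) (inr i) := by
  obtain ⟨m, hmi, hm⟩ := hG.exists_source_adj i
  rcases hleaves (hG.degree_inr_eq_one hm) with h | h <;> obtain rfl := Sum.inr_injective h
  exacts [Or.inl hmi, Or.inr hmi]

theorem not_adj_inl_inr_and_adj_inl_inr_of_subset_leaves (hG : IsCMLabeling G) {m₁ m₂ : α}
    (hleaves : {v | G.degree v = 1} ⊆ {inr m₁, inr m₂}) (j : α) :
    ¬ (G.Adj (inl m₁) (inr j) ∧ G.Adj (inl m₂) (inr j)) := by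
  rintro ⟨h₁, h₂⟩
  obtain ⟨J, hjJ, hJ⟩ := hG.exists_sink_adj j
  have hJinl : ∀ k, ¬ G.Adj (inl J) (inl k) := by
    intro k
    rcases hG.adj_inl_inr_of_subset_leaves hleaves k with hk | hk
    · exact hG.not_adj_inl_inl_of_adj_inl_inr_of_adj_inl_inr (hG.adj_inl_inr_trans h₁ hjJ) hk
    · exact hG.not_adj_inl_inl_of_adj_inl_inr_of_adj_inl_inr (hG.adj_inl_inr_trans h₂ hjJ) hk
  rcases hleaves (hG.degree_inl_eq_one hJ hJinl) with h | h <;> exact Sum.inl_ne_inr h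

theorem colorable_two_of_subset_leaves (hG : IsCMLabeling G) {m₁ m₂ : α}
    (hleaves : {v | G.degree v = 1} ⊆ {inr m₁, inr m₂}) : G.Colorable 2 := by
  have hcover := hG.adj_inl_inr_of_subset_leaves hleaves
  have hdisjoint := hG.not_adj_inl_inr_and_adj_inl_inr_of_subset_leaves hleaves
  refine colorable_two_of_adj_inl_iff {i | G.Adj (inl m₁) (inr i)} hG.not_adj_inr
    (fun a b hab => ⟨fun ha hb => ?_, fun hb => ?_⟩) (fun i j hij => ⟨fun hi => ?_, fun hj => ?_⟩)
  · exact hG.not_adj_inl_inl_of_adj_inl_inr_of_adj_inl_inr ha hb hab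
  · by_contra ha
    exact hG.not_adj_inl_inl_of_adj_inl_inr_of_adj_inl_inr
      ((hcover a).resolve_left ha) ((hcover b).resolve_left hb) hab
  · exact hG.adj_inl_inr_trans hi hij
  · by_contra hi
    exact hdisjoint j ⟨hj, hG.adj_inl_inr_trans ((hcover i).resolve_left hi) hij⟩

end IsCMLabeling

theorem bipartite_of_two_leaves_general (t : ℕ) (G : SimpleGraph (Fin t ⊕ Fin t))
    [DecidableRel G.Adj]
    (h1 : ∀ i, G.Adj (inl i) (inr i))
    (h2 : ∀ i j, G.Adj (inl i) (inr j) → i ≤ j)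
    (h3 : ∀ i j, G.Adj (inl i) (inr j) → ¬ G.Adj (inl i) (inl j))
    (h4 : ∀ i j k, i ≠ j → j ≠ k → i ≠ k →
      G.Adj (inl i) (inr k) → G.Adj (inl k) (inr j) → G.Adj (inl i) (inr j))
    (h5 : ∀ i j k, i ≠ j → j ≠ k → i ≠ k →
      G.Adj (inl i) (inr k) → G.Adj (inl k) (inl j) → G.Adj (inl i) (inl j))
    (hY : ∀ i j, ¬ G.Adj (inr i) (inr j))
    (hleaf : {v : Fin t ⊕ Fin t | G.degree v = 1}.ncard = 2) :
    G.Colorable 2 := by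
  have hG : IsCMLabeling G := ⟨h1, h2, h3, h4, h5, hY⟩
  by_cases hX : ∃ a b, G.Adj (inl a) (inl b)
  · obtain ⟨a, b, hab⟩ := hX
    obtain ⟨m₁, hm₁a, hm₁⟩ := hG.exists_source_adj a
    obtain ⟨m₂, hm₂b, hm₂⟩ := hG.exists_source_adj b
    have hne : (inr m₁ : Fin t ⊕ Fin t) ≠ inr m₂ := by
      rintro ⟨⟩
      exact hG.not_adj_inl_inl_of_adj_inl_inr_of_adj_inl_inr hm₁a hm₂b hab
    have hleaves : {inr m₁, inr m₂} = {v | G.degree v = 1} :=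
      Set.eq_of_subset_of_ncard_le
        (Set.pair_subset (hG.degree_inr_eq_one hm₁) (hG.degree_inr_eq_one hm₂))
        (by rw [hleaf, Set.ncard_pair hne]) (Set.toFinite _)
    exact hG.colorable_two_of_subset_leaves hleaves.superset
  · push Not at hX
    exact colorable_two_of_adj_inl_iff Set.univ hY (fun a b hab => absurd hab (hX a b))
      (by simp)

/-- A Cohen–Macaulay very well-covered graph on `{x_1,...,x_t,y_1,...,y_t}`
(conditions (1*)–(5*), `Y` independent, every maximal independent set of cardinality `t`)
having exactly two leaf vertices is bipartite. -/
theorem bipartite_of_two_leaves (t : ℕ) (G : SimpleGraph (Fin t ⊕ Fin t))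
    [DecidableRel G.Adj]
    (h1 : ∀ i, G.Adj (inl i) (inr i))
    (h2 : ∀ i j, G.Adj (inl i) (inr j) → i ≤ j)
    (h3 : ∀ i j, G.Adj (inl i) (inr j) → ¬ G.Adj (inl i) (inl j))
    (h4 : ∀ i j k, i ≠ j → j ≠ k → i ≠ k →
      G.Adj (inl i) (inr k) → G.Adj (inl k) (inr j) → G.Adj (inl i) (inr j))
    (h5 : ∀ i j k, i ≠ j → j ≠ k → i ≠ k →
      G.Adj (inl i) (inr k) → G.Adj (inl k) (inl j) → G.Adj (inl i) (inl j))
    (hY : ∀ i j, ¬ G.Adj (inr i) (inr j))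
    (hwc : ∀ T : Set (Fin t ⊕ Fin t), MaximalIndepSet G T → T.ncard = t)
    (hleaf : {v : Fin t ⊕ Fin t | G.degree v = 1}.ncard = 2) :
    G.Colorable 2 :=
  bipartite_of_two_leaves_general t G h1 h2 h3 h4 h5 hY hleaf
end

section
/- Let R = K[a,b,x,y] and I = ((ax)^p, (ab)^k, (by)^q) with positive integers p, q, k satisfying min{p,q} ≥ 2k. Then for every n ≥ 1, the n-th ordinary power of I equals its n-th symbolic power; concretely, I^n = (a^k b^k, a^p, b^q)^n ∩ (a^k, y^q)^n ∩ (b^k, x^p)^n. -/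
/-!
All ideals here are monomial ideals, so `f ∈ J ^ n` means that every monomial of `f` is divisible
by a product of `n` generators of `J`, a condition on exponent vectors. The inclusion
`I ^ n ≤ J₁ ^ n ⊓ J₂ ^ n ⊓ J₃ ^ n` is clear since `I ≤ Jᵢ`. Conversely, the counts of generators in
a factorisation of a monomial `a^A b^B x^C y^D` through `J₁ = (a^k b^k, a^p, b^q)`, read as counts
of `(ab)^k, (ax)^p, (by)^q`, respect the `a`- and `b`-degrees, while the factorisations through
`J₂ = (a^k, y^q)` and `J₃ = (b^k, x^p)` cap the numbers of `(by)^q` and `(ax)^p` that fit. As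
`p, q ≥ 2k`, replacing `(ax)^p (by)^q` by `(ab)^(2k)` keeps the `a`- and `b`-degree bounds, and
lowers both counts until they meet the caps.
-/

open MvPolynomial
open scoped Pointwise

theorem Set.mem_nsmul_insert {M : Type*} [AddCommMonoid M] {a x : M} {s : Set M} {n : ℕ} :
    x ∈ n • insert a s ↔ ∃ i j, i + j = n ∧ ∃ y ∈ j • s, x = i • a + y := by
  induction n generalizing x with
  | zero => simp
  | succ n ih =>
    rw [succ_nsmul, Set.mem_add]
    constructor
    · rintro ⟨y, hy, z, rfl | hz, rfl⟩
      · obtain ⟨i, j, rfl, y', hy', rfl⟩ := ih.1 hy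
        exact ⟨i + 1, j, by omega, y', hy', by rw [succ_nsmul]; abel⟩
      · obtain ⟨i, j, rfl, y', hy', rfl⟩ := ih.1 hy
        exact ⟨i, j + 1, by omega, y' + z, by rw [succ_nsmul]; exact Set.add_mem_add hy' hz,
          by abel⟩
    · rintro ⟨_ | i, j, hij, y, hy, rfl⟩
      · obtain rfl : j = n + 1 := by omega
        obtain ⟨y', hy', z, hz, rfl⟩ := hy
        exact ⟨y', ih.2 ⟨0, n, by omega, y', hy', by simp⟩, z, Or.inr hz, by simp⟩
      · exact ⟨i • a + y, ih.2 ⟨i, j, by omega, y, hy, rfl⟩, a, Or.inl rfl, by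
          rw [succ_nsmul]; abel⟩

theorem Set.mem_nsmul_pair {M : Type*} [AddCommMonoid M] {a b x : M} {n : ℕ} :
    x ∈ n • ({a, b} : Set M) ↔ ∃ i j, i + j = n ∧ x = i • a + j • b := by
  simp [Set.mem_nsmul_insert, Set.nsmul_singleton]

theorem Set.mem_nsmul_triple {M : Type*} [AddCommMonoid M] {a b c x : M} {n : ℕ} :
    x ∈ n • ({a, b, c} : Set M) ↔ ∃ i j l, i + j + l = n ∧ x = i • a + j • b + l • c := by
  simp [Set.mem_nsmul_insert, Set.nsmul_singleton, add_assoc]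

theorem Ideal.span_le_span_of_forall_dvd {R : Type*} [CommSemiring R] {s t : Set R}
    (h : ∀ x ∈ s, ∃ y ∈ t, y ∣ x) : Ideal.span s ≤ Ideal.span t :=
  Ideal.span_le.2 fun x hx =>
    let ⟨_, hy, hyx⟩ := h x hx
    Ideal.mem_of_dvd _ hyx (Ideal.subset_span hy)

namespace MvPolynomial

variable {σ R : Type*} [CommSemiring R]

theorem image_monomial_one_pow (S : Set (σ →₀ ℕ)) (n : ℕ) :
    ((fun s => monomial s (1 : R)) '' S) ^ n = (fun s => monomial s (1 : R)) '' (n • S) := by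
  induction n with
  | zero => simp [Set.singleton_one]
  | succ n ih =>
    rw [pow_succ, succ_nsmul, ih, ← Set.image2_add, Set.image_image2, ← Set.image2_mul,
      Set.image2_image_left, Set.image2_image_right]
    simp only [monomial_mul, mul_one]

theorem mem_span_monomial_one_pow_iff {S : Set (σ →₀ ℕ)} {n : ℕ} {f : MvPolynomial σ R} :
    f ∈ Ideal.span ((fun s => monomial s (1 : R)) '' S) ^ n ↔
      ∀ m ∈ f.support, ∃ e ∈ n • S, e ≤ m := by
  rw [Submodule.span_pow, image_monomial_one_pow, mem_ideal_span_monomial_image]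

theorem mem_span_monomial_one_pair_pow_iff {a b : σ →₀ ℕ} {n : ℕ} {f : MvPolynomial σ R} :
    f ∈ Ideal.span {monomial a (1 : R), monomial b 1} ^ n ↔
      ∀ m ∈ f.support, ∃ i j, i + j = n ∧ i • a + j • b ≤ m := by
  have : ({monomial a (1 : R), monomial b 1} : Set _) = (fun s => monomial s 1) '' {a, b} := by
    simp [Set.image_insert_eq]
  simp [this, mem_span_monomial_one_pow_iff, Set.mem_nsmul_pair]

theorem mem_span_monomial_one_triple_pow_iff {a b c : σ →₀ ℕ} {n : ℕ} {f : MvPolynomial σ R} :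
    f ∈ Ideal.span {monomial a (1 : R), monomial b 1, monomial c 1} ^ n ↔
      ∀ m ∈ f.support, ∃ i j l, i + j + l = n ∧ i • a + j • b + l • c ≤ m := by
  have : ({monomial a (1 : R), monomial b 1, monomial c 1} : Set _) =
      (fun s => monomial s 1) '' {a, b, c} := by
    simp [Set.image_insert_eq]
  simp [this, mem_span_monomial_one_pow_iff, Set.mem_nsmul_triple]

end MvPolynomial

/-- `A, B, C, D` are the exponents of `a, b, x, y` in a monomial; in the conclusion `i, j, l`
count the generators `(ax)^p, (ab)^k, (by)^q` of `I`. -/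
theorem exists_path_counts_of_component_counts {k p q n A B C D : ℕ}
    (hp : 2 * k ≤ p) (hq : 2 * k ≤ q)
    (h₁ : ∃ i j l, i + j + l = n ∧ i * k + j * p ≤ A ∧ i * k + l * q ≤ B)
    (h₂ : ∃ i j, i + j = n ∧ i * k ≤ A ∧ j * q ≤ D)
    (h₃ : ∃ i j, i + j = n ∧ i * k ≤ B ∧ j * p ≤ C) :
    ∃ i j l, i + j + l = n ∧ i * p + j * k ≤ A ∧ j * k + l * q ≤ B ∧ i * p ≤ C ∧ l * q ≤ D := by
  obtain ⟨i₁, j₁, l₁, rfl, hA₁, hB₁⟩ := h₁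
  obtain ⟨i₂, l₂, hn₂, hA₂, hD₂⟩ := h₂
  obtain ⟨i₃, j₃, hn₃, hB₃, hC₃⟩ := h₃
  by_cases hj : j₃ + l₁ < j₁
  · obtain ⟨d, rfl⟩ := Nat.exists_eq_add_of_lt hj
    obtain rfl : i₃ = i₁ + 2 * l₁ + d + 1 := by omega
    refine ⟨j₃, i₁ + 2 * l₁ + d + 1, 0, by omega, ?_, by simpa using hB₃, hC₃, by simp⟩
    nlinarith [Nat.mul_le_mul_right l₁ hp, Nat.mul_le_mul_right (d + 1) (by omega : k ≤ p)]
  by_cases hl : l₂ + j₁ < l₁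
  · obtain ⟨d, rfl⟩ := Nat.exists_eq_add_of_lt hl
    obtain rfl : i₂ = i₁ + 2 * j₁ + d + 1 := by omega
    refine ⟨0, i₁ + 2 * j₁ + d + 1, l₂, by omega, by simpa using hA₂, ?_, by simp, hD₂⟩
    nlinarith [Nat.mul_le_mul_right j₁ hq, Nat.mul_le_mul_right (d + 1) (by omega : k ≤ q)]
  -- trading `(ax)^p (by)^q` for `(ab)^(2k)` keeps the `a`- and `b`-degree bounds
  obtain ⟨t, hjt, hlt, htj, htl⟩ : ∃ t, j₁ ≤ j₃ + t ∧ l₁ ≤ l₂ + t ∧ t ≤ j₁ ∧ t ≤ l₁ :=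
    ⟨max (j₁ - j₃) (l₁ - l₂), by omega, by omega, by omega, by omega⟩
  obtain ⟨j, rfl⟩ : ∃ j, j₁ = j + t := ⟨j₁ - t, by omega⟩
  obtain ⟨l, rfl⟩ : ∃ l, l₁ = l + t := ⟨l₁ - t, by omega⟩
  refine ⟨j, i₁ + 2 * t, l, by omega, ?_, ?_, ?_, ?_⟩
  · nlinarith [Nat.mul_le_mul_right t hp]
  · nlinarith [Nat.mul_le_mul_right t hq]
  · exact (Nat.mul_le_mul_right p (by omega)).trans hC₃
  · exact (Nat.mul_le_mul_right q (by omega)).trans hD₂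

theorem pow_eq_symbolicPow_path_general {K : Type*} [Field K] (p q k : ℕ)
    (h : 2 * k ≤ min p q) (n : ℕ) :
    (Ideal.span ({(X 0) ^ p * (X 2) ^ p, (X 0) ^ k * (X 1) ^ k, (X 1) ^ q * (X 3) ^ q} :
        Set (MvPolynomial (Fin 4) K))) ^ n =
      (Ideal.span ({(X 0) ^ k * (X 1) ^ k, (X 0) ^ p, (X 1) ^ q} :
          Set (MvPolynomial (Fin 4) K))) ^ n ⊓
        (Ideal.span ({(X 0) ^ k, (X 3) ^ q} : Set (MvPolynomial (Fin 4) K))) ^ n ⊓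
        (Ideal.span ({(X 1) ^ k, (X 2) ^ p} : Set (MvPolynomial (Fin 4) K))) ^ n := by
  have hp : 2 * k ≤ p := h.trans (min_le_left p q)
  have hq : 2 * k ≤ q := h.trans (min_le_right p q)
  refine le_antisymm (le_inf (le_inf ?_ ?_) ?_) ?_
  · refine Ideal.pow_right_mono (Ideal.span_le_span_of_forall_dvd ?_) n
    rintro _ (rfl | rfl | rfl)
    exacts [⟨_, by simp, dvd_mul_right _ _⟩, ⟨_, by simp, dvd_rfl⟩,
      ⟨_, by simp, dvd_mul_right _ _⟩]
  · refine Ideal.pow_right_mono (Ideal.span_le_span_of_forall_dvd ?_) n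
    rintro _ (rfl | rfl | rfl)
    exacts [⟨_, by simp, (pow_dvd_pow (X 0) (by omega : k ≤ p)).mul_right _⟩,
      ⟨_, by simp, dvd_mul_right _ _⟩, ⟨_, by simp, dvd_mul_left _ _⟩]
  · refine Ideal.pow_right_mono (Ideal.span_le_span_of_forall_dvd ?_) n
    rintro _ (rfl | rfl | rfl)
    exacts [⟨_, by simp, dvd_mul_left _ _⟩, ⟨_, by simp, dvd_mul_left _ _⟩,
      ⟨_, by simp, (pow_dvd_pow (X 1) (by omega : k ≤ q)).mul_right _⟩]
  · intro f hf
    obtain ⟨⟨h₁, h₂⟩, h₃⟩ := Submodule.mem_inf.1 hf |>.imp_left Submodule.mem_inf.1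
    simp only [X_pow_eq_monomial, monomial_mul, one_mul, mem_span_monomial_one_pair_pow_iff,
      mem_span_monomial_one_triple_pow_iff] at h₁ h₂ h₃ ⊢
    simp [Finsupp.le_def, Fin.forall_fin_succ, Finsupp.single_apply] at h₁ h₂ h₃ ⊢
    exact fun m hm => exists_path_counts_of_component_counts hp hq (h₁ m hm) (h₂ m hm) (h₃ m hm)

/-- For the weighted edge ideal `I = ((ax)^p, (ab)^k, (by)^q)` of the path `x–a–b–y`
in `K[a,b,x,y]` with `min{p,q} ≥ 2k`, the ordinary `n`-th power of `I` equals its `n`-th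
symbolic power; concretely `I^n = (a^k b^k, a^p, b^q)^n ∩ (a^k, y^q)^n ∩ (b^k, x^p)^n`.
Here `a = X 0`, `b = X 1`, `x = X 2`, `y = X 3`. -/
theorem pow_eq_symbolicPow_path {K : Type*} [Field K] (p q k : ℕ)
    (hp : 0 < p) (hq : 0 < q) (hk : 0 < k) (h : 2 * k ≤ min p q) (n : ℕ) (hn : 1 ≤ n) :
    (Ideal.span ({(X 0) ^ p * (X 2) ^ p, (X 0) ^ k * (X 1) ^ k, (X 1) ^ q * (X 3) ^ q} :
        Set (MvPolynomial (Fin 4) K))) ^ n =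
      (Ideal.span ({(X 0) ^ k * (X 1) ^ k, (X 0) ^ p, (X 1) ^ q} :
          Set (MvPolynomial (Fin 4) K))) ^ n ⊓
        (Ideal.span ({(X 0) ^ k, (X 3) ^ q} : Set (MvPolynomial (Fin 4) K))) ^ n ⊓
        (Ideal.span ({(X 1) ^ k, (X 2) ^ p} : Set (MvPolynomial (Fin 4) K))) ^ n :=
  pow_eq_symbolicPow_path_general p q k h n
end
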